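/- arXiv:2008.03260 — 3 statements merged into one kernel-verified Lean document; each statement's English description precedes it below -/
import Mathlib

section
/- For binary vectors x, y in {0,1}^d that are not both zero, the probability that a MinHash under a uniformly random permutation π of {1,...,d} collides, i.e. P(min_{i : x_i=1} π(i) = min_{i : y_i=1} π(i)), equals the Jaccard similarity |{i : x_i=1 ∧ y_i=1}| / |{i : x_i=1 ∨ y_i=1}|. -/
open Finset

noncomputable def mhArg {d : ℕ} (U : Finset (Fin d)) (hU : U.Nonempty)
    (π : Equiv.Perm (Fin d)) : Fin d :=
  π.symm ((U.image π).min' (hU.image π))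

lemma mhArg_apply {d : ℕ} (U : Finset (Fin d)) (hU : U.Nonempty)
    (π : Equiv.Perm (Fin d)) : π (mhArg U hU π) = (U.image π).min' (hU.image π) := by
  simp [mhArg]

lemma mhArg_mem {d : ℕ} (U : Finset (Fin d)) (hU : U.Nonempty)
    (π : Equiv.Perm (Fin d)) : mhArg U hU π ∈ U := by
  have h := (U.image π).min'_mem (hU.image π)
  rw [Finset.mem_image] at h
  obtain ⟨i, hi, hπ⟩ := h
  have : mhArg U hU π = i := by
    simp [mhArg, ← hπ]
  rw [this]; exact hi

lemma mhArg_min'_eq_iff {d : ℕ} (U S : Finset (Fin d)) (hU : U.Nonempty)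
    (hS : S.Nonempty) (hSU : S ⊆ U) (π : Equiv.Perm (Fin d)) :
    (S.image π).min' (hS.image π) = (U.image π).min' (hU.image π) ↔ mhArg U hU π ∈ S := by
  constructor
  · intro h
    have hm : (U.image π).min' (hU.image π) ∈ S.image π := by
      rw [← h]; exact (S.image π).min'_mem (hS.image π)
    rw [Finset.mem_image] at hm
    obtain ⟨i, hi, hπ⟩ := hm
    have : mhArg U hU π = i := by simp [mhArg, ← hπ]
    rw [this]; exact hi
  · intro h
    apply le_antisymm
    · apply Finset.min'_le
      rw [← mhArg_apply U hU π]
      exact Finset.mem_image_of_mem π h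
    · apply Finset.min'_le
      have := (S.image π).min'_mem (hS.image π)
      exact Finset.image_subset_image hSU this

lemma mhArg_mul_swap {d : ℕ} (U : Finset (Fin d)) (hU : U.Nonempty)
    (π : Equiv.Perm (Fin d)) {j k : Fin d} (hj : j ∈ U) (hk : k ∈ U) :
    mhArg U hU (π * Equiv.swap j k) = Equiv.swap j k (mhArg U hU π) := by
  have himg : U.image (π * Equiv.swap j k) = U.image π := by
    have h1 : U.image (Equiv.swap j k) = U := by
      apply Finset.eq_of_subset_of_card_le
      · intro a ha
        rw [Finset.mem_image] at ha
        obtain ⟨b, hb, hba⟩ := ha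
        rcases Equiv.swap_apply_def j k b ▸ hba with h
        by_cases hbj : b = j
        · subst hbj; rw [Equiv.swap_apply_left] at hba; rw [← hba]; exact hk
        · by_cases hbk : b = k
          · subst hbk; rw [Equiv.swap_apply_right] at hba; rw [← hba]; exact hj
          · rw [Equiv.swap_apply_of_ne_of_ne hbj hbk] at hba; rw [← hba]; exact hb
      · rw [Finset.card_image_of_injective _ (Equiv.injective _)]
    calc U.image (π * Equiv.swap j k) = (U.image (Equiv.swap j k)).image π := by
          rw [Finset.image_image]; rfl
      _ = U.image π := by rw [h1]
  simp only [mhArg]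
  have : ((U.image (π * Equiv.swap j k)).min' (hU.image _)) = ((U.image π).min' (hU.image π)) := by
    congr 1
  rw [this]
  rfl

lemma mhArg_fiber_card_eq {d : ℕ} (U : Finset (Fin d)) (hU : U.Nonempty)
    {j k : Fin d} (hj : j ∈ U) (hk : k ∈ U) :
    (Finset.univ.filter (fun π : Equiv.Perm (Fin d) => mhArg U hU π = j)).card =
    (Finset.univ.filter (fun π : Equiv.Perm (Fin d) => mhArg U hU π = k)).card := by
  apply Finset.card_bij' (fun π _ => π * Equiv.swap j k) (fun π _ => π * Equiv.swap j k)
  · intro π hπ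
    rw [Finset.mem_filter] at hπ ⊢
    refine ⟨Finset.mem_univ _, ?_⟩
    rw [mhArg_mul_swap U hU π hj hk, hπ.2, Equiv.swap_apply_left]
  · intro π hπ
    rw [Finset.mem_filter] at hπ ⊢
    refine ⟨Finset.mem_univ _, ?_⟩
    rw [mhArg_mul_swap U hU π hj hk, hπ.2, Equiv.swap_apply_right]
  · intro π _; rw [mul_assoc, Equiv.swap_mul_self, mul_one]
  · intro π _; rw [mul_assoc, Equiv.swap_mul_self, mul_one]

/-- MinHash collision probability equals Jaccard similarity. -/
theorem minhash_collision_prob_eq_jaccard (d : ℕ) (x y : Fin d → Bool)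
    (hx : (Finset.univ.filter (fun i => x i = true)).Nonempty)
    (hy : (Finset.univ.filter (fun i => y i = true)).Nonempty) :
    ((Finset.univ.filter (fun π : Equiv.Perm (Fin d) =>
        ((Finset.univ.filter (fun i => x i = true)).image π).min' (hx.image π) =
        ((Finset.univ.filter (fun i => y i = true)).image π).min' (hy.image π))).card : ℚ) /
      (Fintype.card (Equiv.Perm (Fin d)) : ℚ) =
    ((Finset.univ.filter (fun i => x i = true ∧ y i = true)).card : ℚ) /
      ((Finset.univ.filter (fun i => x i = true ∨ y i = true)).card : ℚ) := by
  classical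
  set A := Finset.univ.filter (fun i => x i = true) with hA
  set B := Finset.univ.filter (fun i => y i = true) with hB
  set U := A ∪ B with hUdef
  have hUne : U.Nonempty := hx.mono Finset.subset_union_left
  have hIeq : Finset.univ.filter (fun i => x i = true ∧ y i = true) = A ∩ B := by
    ext i; simp [hA, hB]
  have hUeq : Finset.univ.filter (fun i => x i = true ∨ y i = true) = U := by
    ext i; simp [hA, hB, hUdef]
  rw [hIeq, hUeq]
  -- rewrite the collision condition
  have hcond : ∀ π : Equiv.Perm (Fin d),
      ((A.image π).min' (hx.image π) = (B.image π).min' (hy.image π)) ↔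
      mhArg U hUne π ∈ A ∩ B := by
    intro π
    have hAU : (A.image π).min' (hx.image π) = (U.image π).min' (hUne.image π) ↔
        mhArg U hUne π ∈ A :=
      mhArg_min'_eq_iff U A hUne hx Finset.subset_union_left π
    have hBU : (B.image π).min' (hy.image π) = (U.image π).min' (hUne.image π) ↔
        mhArg U hUne π ∈ B :=
      mhArg_min'_eq_iff U B hUne hy Finset.subset_union_right π
    have hmin : (U.image π).min' (hUne.image π) =
        min ((A.image π).min' (hx.image π)) ((B.image π).min' (hy.image π)) := by
      have : U.image π = A.image π ∪ B.image π := by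
        rw [hUdef, Finset.image_union]
      apply le_antisymm
      · apply le_min
        · exact Finset.min'_subset _ (Finset.image_subset_image Finset.subset_union_left)
        · exact Finset.min'_subset _ (Finset.image_subset_image Finset.subset_union_right)
      · have hm : (U.image π).min' (hUne.image π) ∈ A.image π ∪ B.image π := by
          rw [← this]; exact (U.image π).min'_mem (hUne.image π)
        rw [Finset.mem_union] at hm
        rcases hm with hm | hm
        · exact min_le_of_left_le (Finset.min'_le _ _ hm)
        · exact min_le_of_right_le (Finset.min'_le _ _ hm)
    constructor
    · intro h
      have hA' : (A.image π).min' (hx.image π) = (U.image π).min' (hUne.image π) := by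
        rw [hmin, ← h, min_self]
      have hB' : (B.image π).min' (hy.image π) = (U.image π).min' (hUne.image π) := by
        rw [hmin, h, min_self]
      exact Finset.mem_inter.mpr ⟨hAU.mp hA', hBU.mp hB'⟩
    · intro h
      rw [Finset.mem_inter] at h
      rw [hAU.mpr h.1, hBU.mpr h.2]
  have hfilter : Finset.univ.filter (fun π : Equiv.Perm (Fin d) =>
      (A.image π).min' (hx.image π) = (B.image π).min' (hy.image π)) =
      Finset.univ.filter (fun π => mhArg U hUne π ∈ A ∩ B) := by
    apply Finset.filter_congr
    intro π _
    exact hcond π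
  rw [hfilter]
  -- counting
  have hUne' := hUne
  obtain ⟨j₀, hj₀⟩ := hUne'
  set N := (Finset.univ.filter (fun π : Equiv.Perm (Fin d) => mhArg U hUne π = j₀)).card with hN
  have hfib : ∀ j ∈ U,
      (Finset.univ.filter (fun π : Equiv.Perm (Fin d) => mhArg U hUne π = j)).card = N :=
    fun j hj => mhArg_fiber_card_eq U hUne hj hj₀
  have htotal : Fintype.card (Equiv.Perm (Fin d)) = U.card * N := by
    rw [← Finset.card_univ]
    rw [Finset.card_eq_sum_card_fiberwise (f := fun π => mhArg U hUne π) (t := U)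
      (fun π _ => mhArg_mem U hUne π)]
    rw [Finset.sum_congr rfl hfib, Finset.sum_const, smul_eq_mul]
  have hcoll : (Finset.univ.filter (fun π : Equiv.Perm (Fin d) => mhArg U hUne π ∈ A ∩ B)).card
      = (A ∩ B).card * N := by
    rw [Finset.card_eq_sum_card_fiberwise (f := fun π => mhArg U hUne π) (t := A ∩ B)
      (s := Finset.univ.filter (fun π : Equiv.Perm (Fin d) => mhArg U hUne π ∈ A ∩ B))
      (fun π hπ => (Finset.mem_filter.mp hπ).2)]
    have : ∀ j ∈ A ∩ B,
        ((Finset.univ.filter (fun π : Equiv.Perm (Fin d) => mhArg U hUne π ∈ A ∩ B)).filter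
          (fun π => mhArg U hUne π = j)).card = N := by
      intro j hj
      have : (Finset.univ.filter (fun π : Equiv.Perm (Fin d) => mhArg U hUne π ∈ A ∩ B)).filter
          (fun π => mhArg U hUne π = j) =
          Finset.univ.filter (fun π : Equiv.Perm (Fin d) => mhArg U hUne π = j) := by
        ext π
        simp only [Finset.mem_filter, Finset.mem_univ, true_and]
        constructor
        · exact fun h => h.2
        · intro h; exact ⟨h ▸ hj, h⟩
      rw [this]
      exact hfib j (Finset.inter_subset_union.trans (le_of_eq rfl) hj)
    rw [Finset.sum_congr rfl this, Finset.sum_const, smul_eq_mul]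
  rw [hcoll, htotal]
  have hUcard : (0:ℚ) < U.card := by exact_mod_cast Finset.card_pos.mpr hUne
  have hNpos : (0:ℚ) < N := by
    have hpos : 0 < Fintype.card (Equiv.Perm (Fin d)) := Fintype.card_pos
    rw [htotal] at hpos
    have hN0 : 0 < N := by
      by_contra h
      push_neg at h
      interval_cases N
      simp at hpos
    exact_mod_cast hN0
  push_cast
  field_simp
end

section
/- Let f_good ~ Binomial(L, p) with p ≥ p1^K and f_bad ~ Binomial(L, q) with q ≤ p2^K, independent. If p1^K · L − p2^K · L > 2C√L, then P(f_good ≤ f_bad) ≤ 4·exp(−2C²). -/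
open MeasureTheory ProbabilityTheory
open scoped ENNReal

/-- Hoeffding's lemma, Bernoulli MGF form: `1 - p + p e^t ≤ exp (p t + t²/8)`. -/
lemma hoeffding_mgf (p : ℝ) (hp0 : 0 ≤ p) (hp1 : p ≤ 1) (t : ℝ) :
    1 - p + p * Real.exp t ≤ Real.exp (p * t + t ^ 2 / 8) := by
  set D : ℝ → ℝ := fun s => 1 - p + p * Real.exp s with hDdef
  have hD : ∀ s, 0 < D s := by
    intro s
    rcases eq_or_lt_of_le hp0 with h | h
    · simp [hDdef, ← h]
    · have := Real.exp_pos s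
      have : 0 < p * Real.exp s := mul_pos h this
      simp only [hDdef]
      nlinarith
  set g : ℝ → ℝ := fun s => p * s + s ^ 2 / 8 - Real.log (D s) with hgdef
  set g' : ℝ → ℝ := fun s => p + s / 4 - p * Real.exp s / D s with hg'def
  have hDderiv : ∀ s, HasDerivAt D (p * Real.exp s) s := by
    intro s
    exact ((Real.hasDerivAt_exp s).const_mul p).const_add (1 - p)
  have hgderiv : ∀ s, HasDerivAt g (g' s) s := by
    intro s
    have h1 : HasDerivAt (fun s : ℝ => p * s) p s := by
      simpa using (hasDerivAt_id s).const_mul p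
    have h2 : HasDerivAt (fun s : ℝ => s ^ 2 / 8) (s / 4) s := by
      have := (hasDerivAt_pow 2 s).div_const 8
      refine this.congr_deriv ?_
      rw [show (2:ℕ) - 1 = 1 from rfl]; push_cast; ring
    have h3 : HasDerivAt (fun s => Real.log (D s)) (p * Real.exp s / D s) s :=
      (hDderiv s).log (ne_of_gt (hD s))
    exact (h1.add h2).sub h3
  have hg'deriv : ∀ s, HasDerivAt g' (1 / 4 - p * Real.exp s * (1 - p) / (D s) ^ 2) s := by
    intro s
    have h2 : HasDerivAt (fun s : ℝ => p + s / 4) (1 / 4) s := by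
      simpa using ((hasDerivAt_id s).div_const 4).const_add p
    have h3 : HasDerivAt (fun s => p * Real.exp s / D s)
        ((p * Real.exp s * D s - p * Real.exp s * (p * Real.exp s)) / (D s) ^ 2) s := by
      exact ((Real.hasDerivAt_exp s).const_mul p).div (hDderiv s) (ne_of_gt (hD s))
    have := h2.sub h3
    refine this.congr_deriv ?_
    have hne : D s ≠ 0 := ne_of_gt (hD s)
    rw [show D s = 1 - p + p * Real.exp s from rfl]
    ring
  have hg''nonneg : ∀ s, 0 ≤ 1 / 4 - p * Real.exp s * (1 - p) / (D s) ^ 2 := by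
    intro s
    have hDs := hD s
    have h : p * Real.exp s * (1 - p) / (D s) ^ 2 ≤ 1 / 4 := by
      rw [div_le_iff₀ (by positivity)]
      have hexp := Real.exp_pos s
      have : D s = 1 - p + p * Real.exp s := rfl
      nlinarith [sq_nonneg (1 - p - p * Real.exp s)]
    linarith
  have hg'mono : Monotone g' :=
    monotone_of_deriv_nonneg (fun s => (hg'deriv s).differentiableAt)
      (fun s => by rw [(hg'deriv s).deriv]; exact hg''nonneg s)
  have hg'0 : g' 0 = 0 := by
    simp [hg'def, hDdef]
  have hg0 : g 0 = 0 := by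
    have : D 0 = 1 := by simp [hDdef]
    simp [hgdef, this]
  -- g is nonneg everywhere
  have hgnonneg : ∀ s, 0 ≤ g s := by
    intro s
    rcases le_total 0 s with hs | hs
    · have hmono : MonotoneOn g (Set.Ici (0 : ℝ)) := by
        apply monotoneOn_of_deriv_nonneg (convex_Ici 0)
          (fun x _ => (hgderiv x).continuousAt.continuousWithinAt)
          (fun x _ => (hgderiv x).differentiableAt.differentiableWithinAt)
        intro x hx
        rw [(hgderiv x).deriv]
        rw [interior_Ici] at hx
        have : g' 0 ≤ g' x := hg'mono (le_of_lt hx)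
        rw [hg'0] at this
        exact this
      have := hmono (Set.self_mem_Ici) (Set.mem_Ici.mpr hs) hs
      rw [hg0] at this
      exact this
    · have hanti : AntitoneOn g (Set.Iic (0 : ℝ)) := by
        apply antitoneOn_of_deriv_nonpos (convex_Iic 0)
          (fun x _ => (hgderiv x).continuousAt.continuousWithinAt)
          (fun x _ => (hgderiv x).differentiableAt.differentiableWithinAt)
        intro x hx
        rw [(hgderiv x).deriv]
        rw [interior_Iic] at hx
        have : g' x ≤ g' 0 := hg'mono (le_of_lt hx)
        rw [hg'0] at this
        exact this
      have := hanti (Set.mem_Iic.mpr hs) (Set.self_mem_Iic) hs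
      rw [hg0] at this
      exact this
  have := hgnonneg t
  have hlog : Real.log (D t) ≤ p * t + t ^ 2 / 8 := by
    simp only [hgdef] at this
    linarith
  have := (Real.log_le_iff_le_exp (hD t)).mp hlog
  simpa [hDdef] using this

/-- Generic Chernoff-type bound for a binomial tail (real-valued form). -/
lemma chernoff_fin (L : ℕ) (p a s : ℝ) (hp0 : 0 ≤ p) (hp1 : p ≤ 1)
    (pred : Fin (L + 1) → Prop) [DecidablePred pred]
    (hpred : ∀ x : Fin (L + 1), pred x → 0 ≤ s * (((x : ℕ) : ℝ) - a)) :
    ∑ x ∈ Finset.univ.filter pred,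
      (L.choose (x : ℕ) : ℝ) * p ^ (x : ℕ) * (1 - p) ^ (L - (x : ℕ))
      ≤ Real.exp (-(s * a) + (p * s + s ^ 2 / 8) * L) := by
  have h1p : (0 : ℝ) ≤ 1 - p := by linarith
  have key : ∀ x : Fin (L + 1),
      (L.choose (x : ℕ) : ℝ) * p ^ (x : ℕ) * (1 - p) ^ (L - (x : ℕ))
        * Real.exp (s * (((x : ℕ) : ℝ) - a))
      = Real.exp (-(s * a)) *
        ((L.choose (x : ℕ) : ℝ) * (p * Real.exp s) ^ (x : ℕ) * (1 - p) ^ (L - (x : ℕ))) := by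
    intro x
    have h1 : Real.exp (s * (((x : ℕ) : ℝ) - a))
        = Real.exp s ^ (x : ℕ) * Real.exp (-(s * a)) := by
      rw [← Real.exp_nat_mul, ← Real.exp_add]
      congr 1
      ring
    rw [h1, mul_pow]
    ring
  calc ∑ x ∈ Finset.univ.filter pred,
        (L.choose (x : ℕ) : ℝ) * p ^ (x : ℕ) * (1 - p) ^ (L - (x : ℕ))
      ≤ ∑ x ∈ Finset.univ.filter pred,
        (L.choose (x : ℕ) : ℝ) * p ^ (x : ℕ) * (1 - p) ^ (L - (x : ℕ))
          * Real.exp (s * (((x : ℕ) : ℝ) - a)) := by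
        apply Finset.sum_le_sum
        intro x hx
        have hxa := hpred x (by simpa using (Finset.mem_filter.mp hx).2)
        have h1 : 1 ≤ Real.exp (s * (((x : ℕ) : ℝ) - a)) := Real.one_le_exp hxa
        have h2 : (0 : ℝ) ≤ (L.choose (x : ℕ) : ℝ) * p ^ (x : ℕ) * (1 - p) ^ (L - (x : ℕ)) := by
          positivity
        nlinarith
    _ ≤ ∑ x : Fin (L + 1),
        (L.choose (x : ℕ) : ℝ) * p ^ (x : ℕ) * (1 - p) ^ (L - (x : ℕ))
          * Real.exp (s * (((x : ℕ) : ℝ) - a)) := by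
        apply Finset.sum_le_sum_of_subset_of_nonneg (Finset.filter_subset _ _)
        intro x _ _
        positivity
    _ = Real.exp (-(s * a)) * ∑ x : Fin (L + 1),
        (L.choose (x : ℕ) : ℝ) * (p * Real.exp s) ^ (x : ℕ) * (1 - p) ^ (L - (x : ℕ)) := by
        rw [Finset.mul_sum]
        exact Finset.sum_congr rfl (fun x _ => key x)
    _ = Real.exp (-(s * a)) * (p * Real.exp s + (1 - p)) ^ L := by
        congr 1
        rw [add_pow]
        rw [Fin.sum_univ_eq_sum_range
          (fun i => (L.choose i : ℝ) * (p * Real.exp s) ^ i * (1 - p) ^ (L - i))]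
        exact Finset.sum_congr rfl (fun i _ => by ring)
    _ ≤ Real.exp (-(s * a)) * Real.exp (p * s + s ^ 2 / 8) ^ L := by
        have hbase : p * Real.exp s + (1 - p) ≤ Real.exp (p * s + s ^ 2 / 8) := by
          have := hoeffding_mgf p hp0 hp1 s
          linarith
        have hbase0 : 0 ≤ p * Real.exp s + (1 - p) := by
          have := Real.exp_pos s
          nlinarith
        gcongr
    _ = Real.exp (-(s * a) + (p * s + s ^ 2 / 8) * L) := by
        rw [← Real.exp_nat_mul, ← Real.exp_add]
        congr 1
        ring

/-- Bridge from the `PMF.binomial` measure of a set to a real sum bound. -/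
lemma binomial_measure_le {L : ℕ} {p : ℝ} (hp0 : 0 ≤ p)
    (hple : ENNReal.ofReal p ≤ 1) (pred : Fin (L + 1) → Prop) [DecidablePred pred] (B : ℝ)
    (h : ∑ x ∈ Finset.univ.filter pred,
      (L.choose (x : ℕ) : ℝ) * p ^ (x : ℕ) * (1 - p) ^ (L - (x : ℕ)) ≤ B) :
    (PMF.binomial (Real.toNNReal p) (ENNReal.coe_le_one_iff.mp hple) L).toMeasure {x | pred x} ≤ ENNReal.ofReal B := by
  have hp1 : p ≤ 1 := by
    by_contra hcon
    push_neg at hcon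
    have : (1 : ℝ≥0∞) < ENNReal.ofReal p := by
      rw [← ENNReal.ofReal_one]
      exact ENNReal.ofReal_lt_ofReal_iff_of_nonneg zero_le_one |>.mpr hcon
    exact absurd hple (not_le.mpr this)
  have h1p : (0 : ℝ) ≤ 1 - p := by linarith
  have hset : {x : Fin (L + 1) | pred x} = ↑(Finset.univ.filter pred) := by
    ext x; simp
  rw [hset, PMF.toMeasure_apply_finset]
  have hval : ∀ x : Fin (L + 1),
      PMF.binomial (Real.toNNReal p) (ENNReal.coe_le_one_iff.mp hple) L x
      = ENNReal.ofReal ((L.choose (x : ℕ) : ℝ) * p ^ (x : ℕ) * (1 - p) ^ (L - (x : ℕ))) := by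
    intro x
    rw [PMF.binomial_apply]
    simp only [Fin.val_last]
    change ENNReal.ofReal p ^ (x : ℕ) * (1 - ENNReal.ofReal p) ^ (L - (x : ℕ))
      * ((L.choose (x : ℕ) : ℕ) : ℝ≥0∞) = _
    have h1 : (1 : ℝ≥0∞) - ENNReal.ofReal p = ENNReal.ofReal (1 - p) := by
      rw [← ENNReal.ofReal_one, ← ENNReal.ofReal_sub _ hp0]
    rw [h1, ← ENNReal.ofReal_pow hp0, ← ENNReal.ofReal_pow h1p,
      ← ENNReal.ofReal_natCast (L.choose (x : ℕ)), ← ENNReal.ofReal_mul (by positivity),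
      ← ENNReal.ofReal_mul (by positivity)]
    congr 1
    ring
  calc ∑ x ∈ Finset.univ.filter pred, PMF.binomial (Real.toNNReal p) (ENNReal.coe_le_one_iff.mp hple) L x
      = ∑ x ∈ Finset.univ.filter pred,
        ENNReal.ofReal ((L.choose (x : ℕ) : ℝ) * p ^ (x : ℕ) * (1 - p) ^ (L - (x : ℕ))) :=
        Finset.sum_congr rfl (fun x _ => hval x)
    _ = ENNReal.ofReal (∑ x ∈ Finset.univ.filter pred,
        (L.choose (x : ℕ) : ℝ) * p ^ (x : ℕ) * (1 - p) ^ (L - (x : ℕ))) := by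
        rw [ENNReal.ofReal_sum_of_nonneg]
        intro x _
        positivity
    _ ≤ ENNReal.ofReal B := ENNReal.ofReal_le_ofReal h

set_option maxHeartbeats 1000000 in
/-- If f_good ~ Binomial(L, p) with p ≥ p1^K and f_bad ~ Binomial(L, q) with q ≤ p2^K are
independent, and p1^K·L − p2^K·L > 2C√L, then P(f_good ≤ f_bad) ≤ 4·exp(−2C²). -/
theorem good_beats_bad
    {Ω : Type*} [MeasurableSpace Ω] (μ : Measure Ω) [IsProbabilityMeasure μ]
    (L K : ℕ) (p1 p2 p q : ℝ)
    (hp2 : 0 < p2) (hp12 : p2 < p1) (hp1 : p1 < 1)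
    (hp0 : 0 ≤ p) (hple : ENNReal.ofReal p ≤ 1)
    (hq0 : 0 ≤ q) (hqle : ENNReal.ofReal q ≤ 1)
    (hp : p1 ^ K ≤ p) (hq : q ≤ p2 ^ K)
    (fgood fbad : Ω → Fin (L + 1))
    (hmg : Measurable fgood) (hmb : Measurable fbad)
    (hlawg : Measure.map fgood μ = (PMF.binomial (Real.toNNReal p) (ENNReal.coe_le_one_iff.mp hple) L).toMeasure)
    (hlawb : Measure.map fbad μ = (PMF.binomial (Real.toNNReal q) (ENNReal.coe_le_one_iff.mp hqle) L).toMeasure)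
    (hindep : IndepFun fgood fbad μ)
    (C : ℝ) (hC : 0 < C)
    (hgap : p1 ^ K * L - p2 ^ K * L > 2 * C * Real.sqrt L) :
    μ {ω | (fgood ω : ℕ) ≤ (fbad ω : ℕ)} ≤ ENNReal.ofReal (4 * Real.exp (-2 * C ^ 2)) := by
  -- basic facts about p, q
  have hp1' : p ≤ 1 := ENNReal.ofReal_le_one.mp hple
  have hq1' : q ≤ 1 := ENNReal.ofReal_le_one.mp hqle
  -- L is positive
  have hLpos : 0 < (L : ℝ) := by
    rcases Nat.eq_zero_or_pos L with h | h
    · subst h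
      simp at hgap
    · exact_mod_cast h
  set sqL := Real.sqrt L with hsqLdef
  have hsqL : 0 < sqL := Real.sqrt_pos.mpr hLpos
  have hsqL2 : sqL ^ 2 = L := Real.sq_sqrt (le_of_lt hLpos)
  set t : ℝ := 4 * C / sqL with htdef
  have ht0 : 0 ≤ t := by positivity
  have htsqL : t * sqL = 4 * C := by
    rw [htdef, div_mul_cancel₀ _ (ne_of_gt hsqL)]
  have ht2L : t ^ 2 * (L : ℝ) = 16 * C ^ 2 := by
    have : t ^ 2 * (L : ℝ) = (t * sqL) ^ 2 := by
      rw [mul_pow, hsqL2]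
    rw [this, htsqL]
    ring
  set t₀ : ℝ := p1 ^ K * L - C * sqL with ht₀def
  -- threshold separations
  have hsep_bad : q * L + C * sqL ≤ t₀ := by
    have h1 : q * L ≤ p2 ^ K * L := by
      apply mul_le_mul_of_nonneg_right hq (le_of_lt hLpos)
    simp only [ht₀def]
    nlinarith
  have hsep_good : t₀ ≤ p * L - C * sqL := by
    have h1 : p1 ^ K * L ≤ p * L := by
      apply mul_le_mul_of_nonneg_right hp (le_of_lt hLpos)
    simp only [ht₀def]
    linarith
  -- exponent bounds
  have hexp_good : t * t₀ + (p * (-t) + (-t) ^ 2 / 8) * L ≤ -2 * C ^ 2 := by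
    have h1 : t * t₀ ≤ t * (p * L - C * sqL) := mul_le_mul_of_nonneg_left hsep_good ht0
    have h2 : t * (C * sqL) = 4 * C * C := by
      rw [show t * (C * sqL) = (t * sqL) * C by ring, htsqL]
    nlinarith
  have hexp_bad : -(t * t₀) + (q * t + t ^ 2 / 8) * L ≤ -2 * C ^ 2 := by
    have h1 : t * (q * L + C * sqL) ≤ t * t₀ := mul_le_mul_of_nonneg_left hsep_bad ht0
    have h2 : t * (C * sqL) = 4 * C * C := by
      rw [show t * (C * sqL) = (t * sqL) * C by ring, htsqL]
    nlinarith
  -- the two tail events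
  classical
  have hsub : {ω | (fgood ω : ℕ) ≤ (fbad ω : ℕ)}
      ⊆ {ω | ((fgood ω : ℕ) : ℝ) ≤ t₀} ∪ {ω | t₀ ≤ ((fbad ω : ℕ) : ℝ)} := by
    intro ω hω
    simp only [Set.mem_setOf_eq] at hω
    rcases le_or_gt ((fgood ω : ℕ) : ℝ) t₀ with h | h
    · exact Or.inl h
    · right
      simp only [Set.mem_setOf_eq]
      have : ((fgood ω : ℕ) : ℝ) ≤ ((fbad ω : ℕ) : ℝ) := by exact_mod_cast hω
      linarith
  have hunion : μ {ω | (fgood ω : ℕ) ≤ (fbad ω : ℕ)}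
      ≤ μ {ω | ((fgood ω : ℕ) : ℝ) ≤ t₀} + μ {ω | t₀ ≤ ((fbad ω : ℕ) : ℝ)} :=
    le_trans (measure_mono hsub) (measure_union_le _ _)
  -- good tail bound
  have hgood : μ {ω | ((fgood ω : ℕ) : ℝ) ≤ t₀} ≤ ENNReal.ofReal (Real.exp (-2 * C ^ 2)) := by
    have hset : {ω | ((fgood ω : ℕ) : ℝ) ≤ t₀}
        = fgood ⁻¹' {x : Fin (L + 1) | ((x : ℕ) : ℝ) ≤ t₀} := rfl
    rw [hset, ← Measure.map_apply hmg (MeasurableSet.of_discrete), hlawg]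
    apply binomial_measure_le hp0 hple
    calc ∑ x ∈ Finset.univ.filter (fun x : Fin (L + 1) => ((x : ℕ) : ℝ) ≤ t₀),
          (L.choose (x : ℕ) : ℝ) * p ^ (x : ℕ) * (1 - p) ^ (L - (x : ℕ))
        ≤ Real.exp (-((-t) * t₀) + (p * (-t) + (-t) ^ 2 / 8) * L) := by
          apply chernoff_fin L p t₀ (-t) hp0 hp1'
          intro x hx
          have : (((x : ℕ) : ℝ) - t₀) ≤ 0 := by linarith
          nlinarith
      _ ≤ Real.exp (-2 * C ^ 2) := by
          apply Real.exp_le_exp.mpr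
          have : -((-t) * t₀) = t * t₀ := by ring
          rw [this]
          exact hexp_good
  -- bad tail bound
  have hbad : μ {ω | t₀ ≤ ((fbad ω : ℕ) : ℝ)} ≤ ENNReal.ofReal (Real.exp (-2 * C ^ 2)) := by
    have hset : {ω | t₀ ≤ ((fbad ω : ℕ) : ℝ)}
        = fbad ⁻¹' {x : Fin (L + 1) | t₀ ≤ ((x : ℕ) : ℝ)} := rfl
    rw [hset, ← Measure.map_apply hmb (MeasurableSet.of_discrete), hlawb]
    apply binomial_measure_le hq0 hqle
    calc ∑ x ∈ Finset.univ.filter (fun x : Fin (L + 1) => t₀ ≤ ((x : ℕ) : ℝ)),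
          (L.choose (x : ℕ) : ℝ) * q ^ (x : ℕ) * (1 - q) ^ (L - (x : ℕ))
        ≤ Real.exp (-(t * t₀) + (q * t + t ^ 2 / 8) * L) := by
          apply chernoff_fin L q t₀ t hq0 hq1'
          intro x hx
          have : 0 ≤ (((x : ℕ) : ℝ) - t₀) := by linarith
          nlinarith
      _ ≤ Real.exp (-2 * C ^ 2) := Real.exp_le_exp.mpr hexp_bad
  -- combine
  calc μ {ω | (fgood ω : ℕ) ≤ (fbad ω : ℕ)}
      ≤ μ {ω | ((fgood ω : ℕ) : ℝ) ≤ t₀} + μ {ω | t₀ ≤ ((fbad ω : ℕ) : ℝ)} := hunion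
    _ ≤ ENNReal.ofReal (Real.exp (-2 * C ^ 2)) + ENNReal.ofReal (Real.exp (-2 * C ^ 2)) :=
        add_le_add hgood hbad
    _ = ENNReal.ofReal (2 * Real.exp (-2 * C ^ 2)) := by
        rw [← ENNReal.ofReal_add (by positivity) (by positivity)]
        ring_nf
    _ ≤ ENNReal.ofReal (4 * Real.exp (-2 * C ^ 2)) := by
        apply ENNReal.ofReal_le_ofReal
        have := Real.exp_pos (-2 * C ^ 2)
        linarith
end

section
/- For the single majority-counter cell with update rule as in Boyer–Moore voting, the final count c satisfies c ≥ 2·f_x − N for the final stored element x, where f_x is the number of occurrences of x in the stream and N is the stream length. -/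
/-- Boyer–Moore majority-vote update rule for a single counter cell. -/
def bmStep {α : Type*} [DecidableEq α] (s : Option α × ℕ) (y : α) : Option α × ℕ :=
  match s with
  | (none, _) => (some y, 1)
  | (some h, c) =>
    if c = 0 then (some y, 1)
    else if y = h then (some h, c + 1)
    else (some h, c - 1)

/-- Potential of a cell state with respect to a target element. -/
def bmPhi {α : Type*} [DecidableEq α] (s : Option α × ℕ) (x : α) : ℤ :=
  if s.1 = some x then (s.2 : ℤ) else -(s.2 : ℤ)

lemma bmPhi_step {α : Type*} [DecidableEq α] (s : Option α × ℕ) (y x : α) :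
    bmPhi s x + (2 * (if y = x then 1 else 0) - 1) ≤ bmPhi (bmStep s y) x := by
  obtain ⟨h, c⟩ := s
  cases h with
  | none =>
    simp only [bmStep, bmPhi]
    split_ifs with h1 h2 h2 <;> simp_all <;> omega
  | some a =>
    simp only [bmStep, bmPhi]
    rcases eq_or_ne c 0 with hc | hc
    · subst hc
      simp only [if_pos rfl]
      split_ifs with h1 h2 h2 <;> simp_all <;> omega
    · simp only [if_neg hc]
      rcases eq_or_ne y a with hy | hy
      · subst hy
        simp only [if_pos rfl]
        by_cases hx : y = x <;> simp_all
      · simp only [if_neg hy]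
        have : (↑(c - 1) : ℤ) = (c : ℤ) - 1 := by omega
        by_cases hx : a = x
        · subst hx
          simp_all
        · by_cases hyx : y = x <;> simp_all <;> omega

lemma bmPhi_fold {α : Type*} [DecidableEq α] (S : List α) (s : Option α × ℕ) (x : α) :
    bmPhi s x + (2 * (S.count x : ℤ) - (S.length : ℤ)) ≤ bmPhi (S.foldl bmStep s) x := by
  induction S generalizing s with
  | nil => simp
  | cons y T ih =>
    simp only [List.foldl_cons, List.count_cons, List.length_cons]
    have h1 := bmPhi_step s y x
    have h2 := ih (bmStep s y)
    rcases eq_or_ne y x with hy | hy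
    · subst hy; simp at h1 ⊢; push_cast; omega
    · simp [hy] at h1 ⊢; push_cast; omega

/-- The final count of the Boyer–Moore cell satisfies c ≥ 2·f_x − N for the final stored
element x, where f_x is the number of occurrences of x and N is the stream length. -/
theorem bm_final_count_lower_bound {α : Type*} [DecidableEq α] (S : List α) (x : α) (c : ℕ)
    (hfinal : S.foldl bmStep (none, 0) = (some x, c)) :
    2 * (S.count x : ℤ) - (S.length : ℤ) ≤ (c : ℤ) := by
  have h := bmPhi_fold S (none, 0) x
  rw [hfinal] at h
  simp [bmPhi] at h
  omega
end
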